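/- (The widest path can be solved via the generalized Bellman–Ford algorithm.) For all vertices u, v : V, the (max, min) Bellman–Ford iterates are entrywise monotone nondecreasing in t and converge to the widest-path value, i.e., ⨆_{t : ℕ} (W_t u v) = ⨆_{k : ℕ} ⨆ over all walks p of length k from u to v of ⨅_{i=0}^{k-1} w (p i) (p (i+1)) (the supremum over all walks of any length of the minimum edge capacity along the walk, with the empty infimum for k = 0 equal to ∞). -/

import Mathlib

open ENNReal

/-- The (max, min) generalized Bellman–Ford iterates for widest path:
`W 0 u v = if u = v then ∞ else 0` and
`W (t+1) u v = max (⨆ x, min (W t u x) (w x v)) (W 0 u v)`. -/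
noncomputable def maxMinBF {V : Type*} [Fintype V] [DecidableEq V]
    (w : Matrix V V ℝ≥0∞) : ℕ → V → V → ℝ≥0∞
  | 0 => fun u v => if u = v then ∞ else 0
  | t + 1 => fun u v =>
      max (⨆ x : V, min (maxMinBF w t u x) (w x v)) (if u = v then ∞ else 0)

/-!
By induction on `t`, `maxMinBF w t u v` is the largest bottleneck capacity of a walk from `u` to
`v` of length at most `t`: a walk of length `t + 1` is a walk of length `t` to some `x` followed by
the edge `x → v`, and its bottleneck is the minimum of the two. Hence every iterate is bounded by
the widest-path value, and every walk of length `k` is accounted for by the `k`-th iterate.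
-/

lemma Fin.iInf_eq_iInf_castSucc_inf_last {α : Type*} [CompleteLattice α] {n : ℕ}
    (f : Fin (n + 1) → α) : ⨅ i, f i = (⨅ i : Fin n, f i.castSucc) ⊓ f (Fin.last n) := by
  apply le_antisymm
  · exact le_inf (le_iInf fun i => iInf_le _ _) (iInf_le _ _)
  · refine le_iInf fun i => ?_
    induction i using Fin.lastCases with
    | last => exact inf_le_right
    | cast i => exact inf_le_left.trans (iInf_le _ i)

section WidestPath

variable {V α : Type*} [CompleteLattice α] (w : Matrix V V α)

def walkWidth {k : ℕ} (p : Fin (k + 1) → V) : α :=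
  ⨅ i : Fin k, w (p i.castSucc) (p i.succ)

def widestPath (u v : V) : α :=
  ⨆ k : ℕ, ⨆ p : {p : Fin (k + 1) → V // p 0 = u ∧ p (Fin.last k) = v}, walkWidth w p.1

lemma walkWidth_eq_walkWidth_init_inf {k : ℕ} (p : Fin (k + 2) → V) :
    walkWidth w p =
      walkWidth w (Fin.init p) ⊓ w (p (Fin.last k).castSucc) (p (Fin.last (k + 1))) := by
  rw [walkWidth, Fin.iInf_eq_iInf_castSucc_inf_last, Fin.succ_last]
  rfl

lemma walkWidth_snoc {k : ℕ} (p : Fin (k + 1) → V) (y : V) :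
    walkWidth w (Fin.snoc p y : Fin (k + 2) → V) = walkWidth w p ⊓ w (p (Fin.last k)) y := by
  rw [walkWidth_eq_walkWidth_init_inf, Fin.init_snoc, Fin.snoc_castSucc, Fin.snoc_last]

variable {w}

lemma walkWidth_le_widestPath {u v : V} {k : ℕ} {p : Fin (k + 1) → V} (h0 : p 0 = u)
    (hlast : p (Fin.last k) = v) : walkWidth w p ≤ widestPath w u v :=
  le_iSup₂_of_le (f := fun k (p : {p : Fin (k + 1) → V // p 0 = u ∧ p (Fin.last k) = v}) =>
    walkWidth w p.1) k ⟨p, h0, hlast⟩ le_rfl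

lemma widestPath_self (u : V) : widestPath w u u = ⊤ :=
  top_le_iff.mp <| (iInf_of_empty _).ge.trans <|
    walkWidth_le_widestPath (w := w) (p := fun _ : Fin 1 => u) rfl rfl

end WidestPath

lemma widestPath_inf_le {V α : Type*} [Order.Frame α] {w : Matrix V V α} (u x v : V) :
    widestPath w u x ⊓ w x v ≤ widestPath w u v := by
  rw [widestPath, iSup_inf_eq]
  refine iSup_le fun k => ?_
  rw [iSup_inf_eq]
  refine iSup_le fun q => ?_
  obtain ⟨p, h0, rfl⟩ := q
  rw [← walkWidth_snoc]
  exact walkWidth_le_widestPath ((Fin.snoc_castSucc (i := 0) ..).trans h0) (Fin.snoc_last ..)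

section BellmanFord

variable {V : Type*} [Fintype V] [DecidableEq V] (w : Matrix V V ℝ≥0∞)

lemma maxMinBF_le_succ (t : ℕ) (u v : V) : maxMinBF w t u v ≤ maxMinBF w (t + 1) u v := by
  induction t generalizing v with
  | zero => exact le_max_right _ _
  | succ t ih => exact max_le_max (iSup_mono fun x => min_le_min (ih x) le_rfl) le_rfl

lemma maxMinBF_monotone (u v : V) : Monotone (fun t : ℕ => maxMinBF w t u v) :=
  monotone_nat_of_le_succ fun t => maxMinBF_le_succ w t u v

lemma maxMinBF_le_widestPath (t : ℕ) (u v : V) : maxMinBF w t u v ≤ widestPath w u v := by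
  have diag_le (v : V) : (if u = v then ∞ else 0) ≤ widestPath w u v := by
    split_ifs with h
    · rw [h, widestPath_self]
    · exact zero_le
  induction t generalizing v with
  | zero => exact diag_le v
  | succ t ih =>
    refine max_le (iSup_le fun x => ?_) (diag_le v)
    exact (min_le_min (ih x) le_rfl).trans (widestPath_inf_le u x v)

lemma walkWidth_le_maxMinBF {k : ℕ} {u v : V} {p : Fin (k + 1) → V} (h0 : p 0 = u)
    (hlast : p (Fin.last k) = v) : walkWidth w p ≤ maxMinBF w k u v := by
  induction k generalizing v with
  | zero =>
    obtain rfl : u = v := h0.symm.trans hlast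
    simp [maxMinBF]
  | succ k ih =>
    rw [walkWidth_eq_walkWidth_init_inf, hlast]
    calc walkWidth w (Fin.init p) ⊓ w (p (Fin.last k).castSucc) v
        ≤ maxMinBF w k u (p (Fin.last k).castSucc) ⊓ w (p (Fin.last k).castSucc) v :=
          inf_le_inf_right _ (ih h0 rfl)
      _ ≤ ⨆ x, min (maxMinBF w k u x) (w x v) := le_iSup_of_le _ le_rfl
      _ ≤ maxMinBF w (k + 1) u v := le_max_left _ _

end BellmanFord

theorem maxMinBF_monotone_and_iSup_eq_widest_path {V : Type*} [Fintype V] [DecidableEq V]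
    (w : Matrix V V ℝ≥0∞) (u v : V) :
    Monotone (fun t : ℕ => maxMinBF w t u v) ∧
      (⨆ t : ℕ, maxMinBF w t u v) =
        ⨆ k : ℕ, ⨆ p : {p : Fin (k + 1) → V // p 0 = u ∧ p (Fin.last k) = v},
          ⨅ i : Fin k, w (p.1 i.castSucc) (p.1 i.succ) := by
  refine ⟨maxMinBF_monotone w u v, le_antisymm ?_ ?_⟩
  · exact iSup_le fun t => maxMinBF_le_widestPath w t u v
  · exact iSup₂_le fun k p =>
      (walkWidth_le_maxMinBF w p.2.1 p.2.2).trans (le_iSup (fun t => maxMinBF w t u v) k)
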